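/- (Unbiasedness of CIPS.) Define the single-sample CIPS value f_CIPS(x,A,ω) := ∑_{a∈𝒜} w(x,a)·C(ω,a)·R(ω,a), where w(x,a) := p_c(x,a,π)/p_c(x,a,π₀) with the convention t/0 := 0. Under the independence of potential rewards condition, the click–reward factorization condition, and the click-wise common support condition, CIPS is unbiased: E_{x∼p, A∼π₀(x), ω∼κ(x,A)}[f_CIPS(x,A,ω)] = V(π). -/

import Mathlib

open scoped BigOperators Classical

/-- Expectation of a real-valued function under a PMF on a finite type. -/
noncomputable def pexp {X : Type*} [Fintype X] (p : PMF X) (f : X → ℝ) : ℝ :=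
  ∑ x, (p x).toReal * f x

/-- Variance of a real-valued function under a PMF on a finite type. -/
noncomputable def pvar {X : Type*} [Fintype X] (p : PMF X) (f : X → ℝ) : ℝ :=
  pexp p (fun x => (f x - pexp p f) ^ 2)

/-- Joint distribution of one logged sample (x, A, ω) with x ∼ p, A ∼ π₀(x), ω ∼ κ(x,A). -/
noncomputable def logged {𝒳 ℛ Ω : Type*} (p : PMF 𝒳) (π₀ : 𝒳 → PMF ℛ)
    (κ : 𝒳 → ℛ → PMF Ω) : PMF (𝒳 × ℛ × Ω) :=
  p.bind fun x => (π₀ x).bind fun A => (κ x A).map fun ω => (x, A, ω)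

/-- Click probability of action a at context x given ranking A: p_c(x,a,A). -/
noncomputable def pcA {𝒳 ℛ Ω 𝒜 : Type*} [Fintype Ω]
    (κ : 𝒳 → ℛ → PMF Ω) (C : Ω → 𝒜 → ℝ) (x : 𝒳) (a : 𝒜) (A : ℛ) : ℝ :=
  pexp (κ x A) fun ω => C ω a

/-- Marginalized click probability of action a at context x under policy μ: p_c(x,a,μ). -/
noncomputable def pcPol {𝒳 ℛ Ω 𝒜 : Type*} [Fintype Ω] [Fintype ℛ]
    (κ : 𝒳 → ℛ → PMF Ω) (C : Ω → 𝒜 → ℝ) (μ : 𝒳 → PMF ℛ) (x : 𝒳) (a : 𝒜) : ℝ :=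
  pexp (μ x) fun A => pcA κ C x a A

/-- Policy value V(π). -/
noncomputable def polValue {𝒳 ℛ Ω 𝒜 : Type*} [Fintype 𝒳] [Fintype ℛ] [Fintype Ω] [Fintype 𝒜]
    (p : PMF 𝒳) (π : 𝒳 → PMF ℛ) (κ : 𝒳 → ℛ → PMF Ω) (C R : Ω → 𝒜 → ℝ) : ℝ :=
  pexp p fun x => pexp (π x) fun A => pexp (κ x A) fun ω => ∑ a, C ω a * R ω a

lemma logged_apply {𝒳 ℛ Ω : Type*} (p : PMF 𝒳) (π₀ : 𝒳 → PMF ℛ)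
    (κ : 𝒳 → ℛ → PMF Ω) (x : 𝒳) (A : ℛ) (ω : Ω) :
    logged p π₀ κ (x, A, ω) = p x * (π₀ x A * κ x A ω) := by
  simp only [logged, PMF.bind_apply, PMF.map_apply]
  rw [tsum_eq_single x, tsum_eq_single A, tsum_eq_single ω]
  · simp
  · intro b hb; simp [Ne.symm hb]
  · intro b hb
    rw [mul_eq_zero]; right
    rw [ENNReal.summable.tsum_eq_zero_iff]; intro c; simp [Ne.symm hb]
  · intro b hb
    rw [mul_eq_zero]; right
    rw [ENNReal.summable.tsum_eq_zero_iff]; intro A'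
    rw [mul_eq_zero]; right
    rw [ENNReal.summable.tsum_eq_zero_iff]; intro c; simp [Ne.symm hb]

lemma pexp_logged {𝒳 ℛ Ω : Type*} [Fintype 𝒳] [Fintype ℛ] [Fintype Ω]
    (p : PMF 𝒳) (π₀ : 𝒳 → PMF ℛ) (κ : 𝒳 → ℛ → PMF Ω) (f : 𝒳 × ℛ × Ω → ℝ) :
    pexp (logged p π₀ κ) f
      = pexp p fun x => pexp (π₀ x) fun A => pexp (κ x A) fun ω => f (x, A, ω) := by
  unfold pexp
  rw [Fintype.sum_prod_type]
  refine Finset.sum_congr rfl fun x _ => ?_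
  rw [Fintype.sum_prod_type, Finset.mul_sum]
  refine Finset.sum_congr rfl fun A _ => ?_
  rw [Finset.mul_sum, Finset.mul_sum]
  refine Finset.sum_congr rfl fun ω _ => ?_
  rw [logged_apply]
  simp [ENNReal.toReal_mul, mul_assoc]

lemma pexp_sum {X 𝒜 : Type*} [Fintype X] [Fintype 𝒜] (p : PMF X) (f : 𝒜 → X → ℝ) :
    pexp p (fun x => ∑ a, f a x) = ∑ a, pexp p (f a) := by
  unfold pexp
  rw [Finset.sum_comm]
  refine Finset.sum_congr rfl fun a _ => ?_
  rw [Finset.mul_sum]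

lemma pexp_nonneg {X : Type*} [Fintype X] (p : PMF X) (f : X → ℝ)
    (hf : ∀ x, 0 ≤ f x) : 0 ≤ pexp p f :=
  Finset.sum_nonneg fun x _ => mul_nonneg ENNReal.toReal_nonneg (hf x)

/-- Unbiasedness of CIPS under independence of potential rewards, click–reward
factorization, and click-wise common support. -/
theorem CIPS_unbiased {𝒳 ℛ Ω 𝒜 : Type*}
    [Fintype 𝒳] [Nonempty 𝒳] [Fintype ℛ] [Nonempty ℛ] [Fintype Ω] [Nonempty Ω] [Fintype 𝒜]
    (p : PMF 𝒳) (π π₀ : 𝒳 → PMF ℛ) (κ : 𝒳 → ℛ → PMF Ω)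
    (C R : Ω → 𝒜 → ℝ) (hC : ∀ ω a, C ω a = 0 ∨ C ω a = 1)
    (q_r : 𝒳 → 𝒜 → ℝ)
    (hind : ∀ x a A, pexp (κ x A) (fun ω => R ω a) = q_r x a)
    (hfact : ∀ x a A,
      pexp (κ x A) (fun ω => C ω a * R ω a) = pcA κ C x a A * q_r x a)
    (hsupp : ∀ x a, 0 < pcPol κ C π x a → 0 < pcPol κ C π₀ x a) :
    pexp (logged p π₀ κ)
        (fun s => ∑ a, (pcPol κ C π s.1 a / pcPol κ C π₀ s.1 a) *
          C s.2.2 a * R s.2.2 a)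
    = polValue p π κ C R := by
  have hCnn : ∀ ω a, (0:ℝ) ≤ C ω a := fun ω a => by rcases hC ω a with h | h <;> simp [h]
  have hpcPolnn : ∀ (μ : 𝒳 → PMF ℛ) x a, 0 ≤ pcPol κ C μ x a := fun μ x a =>
    pexp_nonneg _ _ fun A => pexp_nonneg _ _ fun ω => hCnn ω a
  rw [pexp_logged]
  unfold polValue
  unfold pexp
  refine Finset.sum_congr rfl fun x _ => ?_
  congr 1
  -- reduce both sides to ∑ a, pcPol π x a * q_r x a
  have hL : ∀ A : ℛ, pexp (κ x A) (fun ω => ∑ a,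
      (pcPol κ C π x a / pcPol κ C π₀ x a) * C ω a * R ω a)
      = ∑ a, (pcPol κ C π x a / pcPol κ C π₀ x a) * (pcA κ C x a A * q_r x a) := by
    intro A
    rw [pexp_sum (f := fun a ω => (pcPol κ C π x a / pcPol κ C π₀ x a) * C ω a * R ω a)]
    refine Finset.sum_congr rfl fun a _ => ?_
    have : pexp (κ x A) (fun ω => (pcPol κ C π x a / pcPol κ C π₀ x a) * (C ω a * R ω a))
        = (pcPol κ C π x a / pcPol κ C π₀ x a) * pexp (κ x A) (fun ω => C ω a * R ω a) := by
      unfold pexp; rw [Finset.mul_sum]; exact Finset.sum_congr rfl fun ω _ => by ring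
    simp only [mul_assoc] at *
    rw [this, hfact]
  have hR : ∀ A : ℛ, pexp (κ x A) (fun ω => ∑ a, C ω a * R ω a)
      = ∑ a, pcA κ C x a A * q_r x a := by
    intro A
    rw [pexp_sum (f := fun a ω => C ω a * R ω a)]
    exact Finset.sum_congr rfl fun a _ => hfact x a A
  calc pexp (π₀ x) (fun A => pexp (κ x A) fun ω => ∑ a,
        (pcPol κ C π x a / pcPol κ C π₀ x a) * C ω a * R ω a)
      = ∑ a, (pcPol κ C π x a / pcPol κ C π₀ x a) * (pcPol κ C π₀ x a * q_r x a) := by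
        simp only [hL]
        rw [pexp_sum (f := fun a A => (pcPol κ C π x a / pcPol κ C π₀ x a) * (pcA κ C x a A * q_r x a))]
        refine Finset.sum_congr rfl fun a _ => ?_
        unfold pcPol
        unfold pexp
        rw [Finset.sum_mul, Finset.mul_sum]
        exact Finset.sum_congr rfl fun A _ => by ring
    _ = ∑ a, pcPol κ C π x a * q_r x a := by
        refine Finset.sum_congr rfl fun a _ => ?_
        rcases lt_or_eq_of_le (hpcPolnn π x a) with hpos | hzero
        · have h0 := hsupp x a hpos
          rw [← mul_assoc, div_mul_cancel₀ _ (ne_of_gt h0)]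
        · rw [← hzero]; simp
    _ = pexp (π x) (fun A => pexp (κ x A) fun ω => ∑ a, C ω a * R ω a) := by
        simp only [hR]
        rw [pexp_sum (f := fun a A => pcA κ C x a A * q_r x a)]
        refine Finset.sum_congr rfl fun a _ => ?_
        unfold pcPol pexp
        rw [Finset.sum_mul]
        exact Finset.sum_congr rfl fun A _ => by ring
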